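/- Let T satisfy the sectorial-type hypotheses (ray S_ω in the S-resolvent set with ‖Q_s(T)^{-1}‖ ≤ M/|s|², ‖TQ_s(T)^{-1}‖ ≤ M/|s|). Then for all n < k < m ∈ ℕ₀, the space D(Tᵏ) belongs to the class J_{(k−n)/(m−n)}(D(Tⁿ), D(T^m)); i.e., there exists C_J ≥ 0 with ‖x‖_{D(Tᵏ)} ≤ C_J·‖x‖_{D(Tⁿ)}^{(m−k)/(m−n)}·‖x‖_{D(T^m)}^{(k−n)/(m−n)} for all x ∈ D(T^m). -/

import Mathlib

noncomputable section

open MulOpposite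

local notation "ℍ" => Quaternion ℝ

/-- The domain `D(Tⁿ)` of the `n`-th power of an operator `T` with domain `D`:
all `x` such that `x, Tx, …, T^{n-1}x ∈ D`. -/
def domN {X : Type*} [AddCommGroup X] [Module ℍᵐᵒᵖ X]
    (T : Module.End ℍᵐᵒᵖ X) (D : Set X) (n : ℕ) : Set X :=
  {x | ∀ j < n, (T ^ j) x ∈ D}

/-- The operator `Q_s(T) = T² − 2 Re(s) T + |s|²` for a quaternion `s`. -/
def Qs {X : Type*} [AddCommGroup X] [Module ℍᵐᵒᵖ X] [Module ℝ X]
    [SMulCommClass ℍᵐᵒᵖ ℝ X] (T : Module.End ℍᵐᵒᵖ X) (s : ℍ) : Module.End ℍᵐᵒᵖ X :=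
  T ^ 2 - (2 * s.re) • T + (‖s‖ ^ 2) • 1

/-- The operator `Q_{t e^{iω}}(T) = T² − 2 t cos(ω) T + t²` associated with the point
`t e^{iω}` of the ray `S_ω` (independent of the imaginary unit `i ∈ 𝕊`). -/
def Qray {X : Type*} [AddCommGroup X] [Module ℍᵐᵒᵖ X] [Module ℝ X]
    [SMulCommClass ℍᵐᵒᵖ ℝ X] (T : Module.End ℍᵐᵒᵖ X) (ω t : ℝ) : Module.End ℍᵐᵒᵖ X :=
  T ^ 2 - (2 * t * Real.cos ω) • T + (t ^ 2) • 1

/-!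
On the ray, `R = Q_{te^{iω}}(T)⁻¹` commutes with `T` on `D(T²)`, and expanding `T w = T R Q w`
with the resolvent bounds gives the Landau-type estimate `‖T w‖ ≤ C (t ‖w‖ + ‖T² w‖ / t)` for all
`t > 0`; optimising in `t` gives `‖T w‖ ≤ 2C √(‖w‖ ‖T² w‖)`. Applied to `w = T^{n+j} x`, this makes
the graph norms `b j = ‖x‖ + ‖T^{n+j} x‖` log-convex up to a constant factor,
`b (j+1) ≤ K √(b j b (j+2))`, and discrete convexity of `log b j` on `0 ≤ j ≤ m − n` is the
interpolation inequality.
-/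

theorem le_chord_of_two_mul_le_add {N : ℕ} {c : ℕ → ℝ}
    (hc : ∀ j, j + 2 ≤ N → 2 * c (j + 1) ≤ c j + c (j + 2)) {i : ℕ} (hi : i ≤ N) :
    N * c i ≤ (N - i) * c 0 + i * c N := by
  set d : ℕ → ℝ := fun j => c (j + 1) - c j
  have hd : ∀ j j', j ≤ j' → j' < N → d j ≤ d j' := by
    intro j j' hjj'
    induction j', hjj' using Nat.le_induction with
    | base => exact fun _ => le_rfl
    | succ j' _ ih =>
      intro hj'
      exact (ih (by omega)).trans (by simp only [d]; linarith [hc j' (by omega)])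
  have hleft : c i - c 0 = ∑ j ∈ Finset.range i, d j := (Finset.sum_range_sub c i).symm
  have hright : c N - c i = ∑ j ∈ Finset.Ico i N, d j := by
    rw [Finset.sum_Ico_eq_sub _ hi, Finset.sum_range_sub, Finset.sum_range_sub]; ring
  have key : ((N : ℝ) - i) * (c i - c 0) ≤ i * (c N - c i) :=
    calc ((N : ℝ) - i) * (c i - c 0) = ∑ j ∈ Finset.range i, ∑ _j' ∈ Finset.Ico i N, d j := by
          simp [hleft, Finset.mul_sum, Nat.cast_sub hi]
      _ ≤ ∑ _j ∈ Finset.range i, ∑ j' ∈ Finset.Ico i N, d j' := by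
          gcongr with j hj j' hj'
          rw [Finset.mem_range] at hj
          rw [Finset.mem_Ico] at hj'
          exact hd j j' (by omega) (by omega)
      _ = i * (c N - c i) := by simp [hright]
  linear_combination key

theorem le_pow_mul_rpow_mul_rpow_of_le_mul_sqrt {K : ℝ} (hK : 0 < K) {N : ℕ} (hN : 0 < N)
    {b : ℕ → ℝ} (hb : ∀ j ≤ N, 0 < b j)
    (h : ∀ j, j + 2 ≤ N → b (j + 1) ≤ K * √(b j * b (j + 2))) {i : ℕ} (hi : i ≤ N) :
    b i ≤ K ^ (i * (N - i)) * b 0 ^ (((N : ℝ) - i) / N) * b N ^ ((i : ℝ) / N) := by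
  set L := Real.log K
  -- subtracting `j (N - j) log K` turns the defect `K` into exact midpoint convexity
  set c : ℕ → ℝ := fun j => Real.log (b j) - L * (j * ((N : ℝ) - j))
  have hc : ∀ j, j + 2 ≤ N → 2 * c (j + 1) ≤ c j + c (j + 2) := by
    intro j hj
    have hlog := Real.log_le_log (hb _ (by omega)) (h j hj)
    rw [Real.log_mul hK.ne' (Real.sqrt_pos.2 (mul_pos (hb j (by omega)) (hb _ hj))).ne',
      Real.log_sqrt (mul_pos (hb j (by omega)) (hb _ hj)).le,
      Real.log_mul (hb j (by omega)).ne' (hb _ hj).ne'] at hlog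
    simp only [c]
    push_cast
    linear_combination 2 * hlog
  have hchord := le_chord_of_two_mul_le_add hc hi
  simp only [c, CharP.cast_eq_zero, zero_mul, mul_zero, sub_zero, sub_self] at hchord
  have hb0 := hb 0 N.zero_le
  have hbN := hb N le_rfl
  rw [← Real.log_le_log_iff (hb i hi) (by positivity), Real.log_mul (by positivity) (by positivity),
    Real.log_mul (by positivity) (by positivity), Real.log_pow, Real.log_rpow hb0,
    Real.log_rpow hbN, Nat.cast_mul, Nat.cast_sub hi]
  have hN' : (0 : ℝ) < N := by exact_mod_cast hN
  rw [← mul_le_mul_iff_of_pos_left hN']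
  field_simp
  linear_combination hchord

theorem le_two_mul_sqrt_mul_of_forall_le {a b C y : ℝ} (ha : 0 < a) (hb : 0 < b)
    (h : ∀ t > 0, y ≤ C * (t * a + b / t)) : y ≤ 2 * C * √(a * b) := by
  have hsa := Real.sqrt_pos.2 ha
  have hsb := Real.sqrt_pos.2 hb
  refine (h (√b / √a) (div_pos hsb hsa)).trans_eq ?_
  rw [Real.sqrt_mul ha.le]
  field_simp
  rw [Real.sq_sqrt ha.le, Real.sq_sqrt hb.le]
  ring

-- No scalar tower `ℝ → 𝕜` is assumed, so real homogeneity has to come from `ℚ`-homogeneity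
-- and the closed graph.
theorem real_smul_mem_and_map_smul_of_isClosed_graph {𝕜 X F : Type*} [DivisionRing 𝕜]
    [AddCommGroup X] [TopologicalSpace X] [Module ℝ X] [ContinuousSMul ℝ X] [Module 𝕜 X]
    [FunLike F X X] [AddMonoidHomClass F X X] {D : Submodule 𝕜 X} {T : F}
    (hT : IsClosed {p : X × X | p.1 ∈ D ∧ T p.1 = p.2}) :
    ∀ (r : ℝ), ∀ v ∈ D, r • v ∈ D ∧ T (r • v) = r • T v := fun r v hv =>
  Rat.denseRange_cast.induction_on r
    (hT.preimage ((continuous_id.smul continuous_const).prodMk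
      (continuous_id.smul continuous_const)))
    fun q => ⟨ratCast_smul_eq ℝ 𝕜 q v ▸ D.smul_mem _ hv, map_ratCast_smul T ℝ ℝ q v⟩

section Domain

variable {X : Type*} [AddCommGroup X] [Module ℍᵐᵒᵖ X] {T : Module.End ℍᵐᵒᵖ X} {D : Set X}

theorem mem_domN_two_iff {x : X} : x ∈ domN T D 2 ↔ x ∈ D ∧ T x ∈ D := by
  simp [domN, Nat.le_one_iff_eq_zero_or_eq_one, or_imp, forall_and]

theorem pow_apply_mem_domN {x : X} {j l : ℕ} (hx : x ∈ domN T D (j + l)) :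
    (T ^ j) x ∈ domN T D l := fun i hi => by
  rw [← Module.End.mul_apply, ← pow_add]
  exact hx _ (by omega)

end Domain

theorem norm_add_norm_pow_succ_le {X : Type*} [NormedAddCommGroup X] [Module ℍᵐᵒᵖ X]
    {T : Module.End ℍᵐᵒᵖ X} {D : Set X} {C : ℝ} (hC : 0 ≤ C)
    (hT : ∀ w ∈ domN T D 2, ∀ t > 0, ‖T w‖ ≤ C * (t * ‖w‖ + ‖T (T w)‖ / t))
    {x : X} (hx0 : x ≠ 0) {j : ℕ} (hx : x ∈ domN T D (j + 2)) :
    ‖x‖ + ‖(T ^ (j + 1)) x‖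
      ≤ (1 + 2 * C) * √((‖x‖ + ‖(T ^ j) x‖) * (‖x‖ + ‖(T ^ (j + 2)) x‖)) := by
  have hxpos := norm_pos_iff.2 hx0
  have ha : 0 < ‖x‖ + ‖(T ^ j) x‖ := add_pos_of_pos_of_nonneg hxpos (norm_nonneg _)
  have hb : 0 < ‖x‖ + ‖(T ^ (j + 2)) x‖ := add_pos_of_pos_of_nonneg hxpos (norm_nonneg _)
  have hTw : T ((T ^ j) x) = (T ^ (j + 1)) x := by rw [pow_succ', Module.End.mul_apply]
  have hTTw : T (T ((T ^ j) x)) = (T ^ (j + 2)) x := by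
    rw [hTw, pow_succ' _ (j + 1), Module.End.mul_apply]
  have hTx := le_two_mul_sqrt_mul_of_forall_le ha hb fun t ht => by
    refine hTw ▸ (hT _ (pow_apply_mem_domN hx) t ht).trans ?_
    rw [hTTw]
    gcongr <;> linarith [norm_nonneg ((T ^ j) x), norm_nonneg ((T ^ (j + 2)) x)]
  have hxle : ‖x‖ ≤ √((‖x‖ + ‖(T ^ j) x‖) * (‖x‖ + ‖(T ^ (j + 2)) x‖)) :=
    calc ‖x‖ = √(‖x‖ * ‖x‖) := (Real.sqrt_mul_self (norm_nonneg x)).symm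
      _ ≤ _ := by gcongr <;> linarith [norm_nonneg ((T ^ j) x), norm_nonneg ((T ^ (j + 2)) x)]
  linarith

theorem Qray_apply {X : Type*} [AddCommGroup X] [Module ℍᵐᵒᵖ X] [Module ℝ X]
    [SMulCommClass ℍᵐᵒᵖ ℝ X] (T : Module.End ℍᵐᵒᵖ X) (ω t : ℝ) (v : X) :
    Qray T ω t v = T (T v) - (2 * t * Real.cos ω) • T v + t ^ 2 • v := by
  simp [Qray, pow_two]

theorem Qray_apply_eq_iff {X : Type*} [AddCommGroup X] [Module ℍᵐᵒᵖ X] [Module ℝ X]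
    [SMulCommClass ℍᵐᵒᵖ ℝ X] {T : Module.End ℍᵐᵒᵖ X} {ω t : ℝ} {y z : X} :
    Qray T ω t y = z ↔ T (T y) = z + (2 * t * Real.cos ω) • T y - t ^ 2 • y := by
  rw [Qray_apply]
  constructor
  · rintro rfl
    abel
  · intro h
    rw [h]
    abel

theorem abs_two_mul_mul_cos_le {t : ℝ} (ht : 0 ≤ t) (ω : ℝ) : |2 * t * Real.cos ω| ≤ 2 * t := by
  rw [abs_mul, abs_of_nonneg (by positivity : 0 ≤ 2 * t)]
  exact mul_le_of_le_one_right (by positivity) (Real.abs_cos_le_one ω)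

section RayResolvent

variable {X : Type*} [NormedAddCommGroup X] [NormedSpace ℝ X] [Module ℍᵐᵒᵖ X]
  [SMulCommClass ℍᵐᵒᵖ ℝ X] {T : Module.End ℍᵐᵒᵖ X} {D : Submodule ℍᵐᵒᵖ X} {ω t : ℝ}
  {R : Module.End ℍᵐᵒᵖ X}

theorem map_Qray_apply (hT : ∀ (r : ℝ), ∀ v ∈ D, T (r • v) = r • T v) {y : X}
    (hy : y ∈ domN T (D : Set X) 2) : T (Qray T ω t y) = Qray T ω t (T y) := by
  obtain ⟨hyD, hTyD⟩ := mem_domN_two_iff.1 hy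
  simp only [Qray_apply, map_add, map_sub, hT _ _ hyD, hT _ _ hTyD]

theorem resolvent_map_comm (hD : ∀ (r : ℝ), ∀ v ∈ D, r • v ∈ D ∧ T (r • v) = r • T v)
    (hRdom : ∀ x, R x ∈ domN T (D : Set X) 2) (hQR : ∀ x, Qray T ω t (R x) = x)
    (hRQ : ∀ x ∈ domN T (D : Set X) 2, R (Qray T ω t x) = x) {x : X}
    (hx : x ∈ domN T (D : Set X) 2) : R (T x) = T (R x) := by
  obtain ⟨hxD, -⟩ := mem_domN_two_iff.1 hx
  obtain ⟨hyD, hTyD⟩ := mem_domN_two_iff.1 (hRdom x)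
  have hT2y : T (T (R x)) ∈ D := by
    rw [Qray_apply_eq_iff.1 (hQR x)]
    exact D.sub_mem (D.add_mem hxD (hD _ _ hTyD).1) (hD _ _ hyD).1
  calc R (T x) = R (T (Qray T ω t (R x))) := by rw [hQR]
    _ = R (Qray T ω t (T (R x))) := by rw [map_Qray_apply (fun r v hv => (hD r v hv).2) (hRdom x)]
    _ = T (R x) := hRQ _ (mem_domN_two_iff.2 ⟨hTyD, hT2y⟩)

theorem norm_T_T_resolvent_le {M : ℝ} (ht : 0 < t) (hQR : ∀ x, Qray T ω t (R x) = x)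
    (hR1 : ∀ x, ‖R x‖ ≤ M / t ^ 2 * ‖x‖) (hR2 : ∀ x, ‖T (R x)‖ ≤ M / t * ‖x‖) (x : X) :
    ‖T (T (R x))‖ ≤ (1 + 3 * M) * ‖x‖ := by
  have hcos := abs_two_mul_mul_cos_le ht.le ω
  rw [Qray_apply_eq_iff.1 (hQR x)]
  calc ‖x + (2 * t * Real.cos ω) • T (R x) - t ^ 2 • R x‖
      ≤ ‖x‖ + ‖(2 * t * Real.cos ω) • T (R x)‖ + ‖t ^ 2 • R x‖ :=
        (norm_sub_le _ _).trans (by gcongr; exact norm_add_le _ _)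
    _ = ‖x‖ + |2 * t * Real.cos ω| * ‖T (R x)‖ + t ^ 2 * ‖R x‖ := by
        rw [norm_smul, norm_smul, Real.norm_eq_abs, Real.norm_of_nonneg (by positivity)]
    _ ≤ ‖x‖ + 2 * t * (M / t * ‖x‖) + t ^ 2 * (M / t ^ 2 * ‖x‖) := by
        gcongr
        · exact hR2 x
        · exact hR1 x
    _ = (1 + 3 * M) * ‖x‖ := by field_simp; ring

theorem norm_apply_le_of_resolvent {M : ℝ} (hM : 0 ≤ M)
    (hD : ∀ (r : ℝ), ∀ v ∈ D, r • v ∈ D ∧ T (r • v) = r • T v)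
    (hRreal : ∀ (r : ℝ) (v : X), R (r • v) = r • R v)
    (hRdom : ∀ x, R x ∈ domN T (D : Set X) 2) (hQR : ∀ x, Qray T ω t (R x) = x)
    (hRQ : ∀ x ∈ domN T (D : Set X) 2, R (Qray T ω t x) = x) (ht : 0 < t)
    (hR1 : ∀ x, ‖R x‖ ≤ M / t ^ 2 * ‖x‖) (hR2 : ∀ x, ‖T (R x)‖ ≤ M / t * ‖x‖) {w : X}
    (hw : w ∈ domN T (D : Set X) 2) :
    ‖T w‖ ≤ (2 + 7 * M) * (t * ‖w‖ + ‖T (T w)‖ / t) := by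
  obtain ⟨hyD, hTyD⟩ := mem_domN_two_iff.1 (hRdom w)
  set r := 2 * t * Real.cos ω
  have hdecomp : T w = T (R (T (T w))) + (-r) • T (T (R w)) + t ^ 2 • T (R w) := by
    conv_lhs => rw [← hRQ w hw, Qray_apply]
    rw [map_add, map_sub, hRreal, hRreal, resolvent_map_comm hD hRdom hQR hRQ hw, map_add,
      map_sub, (hD _ _ hTyD).2, (hD _ _ hyD).2, neg_smul, ← sub_eq_add_neg]
  have hTTw_nonneg : 0 ≤ ‖T (T w)‖ / t := by positivity
  calc ‖T w‖ ≤ ‖T (R (T (T w)))‖ + |r| * ‖T (T (R w))‖ + t ^ 2 * ‖T (R w)‖ := by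
        conv_lhs => rw [hdecomp]
        refine norm_add₃_le.trans_eq ?_
        rw [norm_smul, norm_smul, norm_neg, Real.norm_of_nonneg (sq_nonneg t), Real.norm_eq_abs]
    _ ≤ M / t * ‖T (T w)‖ + 2 * t * ((1 + 3 * M) * ‖w‖) + t ^ 2 * (M / t * ‖w‖) := by
        gcongr
        · exact hR2 _
        · exact abs_two_mul_mul_cos_le ht.le ω
        · exact norm_T_T_resolvent_le ht hQR hR1 hR2 w
        · exact hR2 w
    _ = M * (‖T (T w)‖ / t) + (2 + 7 * M) * (t * ‖w‖) := by field_simp; ring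
    _ ≤ (2 + 7 * M) * (t * ‖w‖ + ‖T (T w)‖ / t) := by nlinarith

end RayResolvent

theorem dom_pow_J_intermediate_general
    {X : Type*} [NormedAddCommGroup X] [NormedSpace ℝ X]
    [Module ℍᵐᵒᵖ X] [SMulCommClass ℍᵐᵒᵖ ℝ X]
    -- `T` is a closed right linear operator with domain `D`
    (T : Module.End ℍᵐᵒᵖ X) (D : Submodule ℍᵐᵒᵖ X)
    (hclosed : IsClosed {p : X × X | p.1 ∈ (D : Set X) ∧ T p.1 = p.2})
    -- the ray `S_ω` lies in the S-resolvent set, with pseudo-resolvents `R t = Q_{te^{iω}}(T)⁻¹`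
    (ω : ℝ)
    (M : ℝ) (hM : 0 ≤ M)
    (R : ℝ → Module.End ℍᵐᵒᵖ X)
    (hRcont : ∀ t > 0, Continuous (R t))
    (hRdom : ∀ t > 0, ∀ x : X, R t x ∈ domN T (D : Set X) 2)
    (hQR : ∀ t > 0, ∀ x : X, Qray T ω t (R t x) = x)
    (hRQ : ∀ t > 0, ∀ x ∈ domN T (D : Set X) 2, R t (Qray T ω t x) = x)
    -- the resolvent bounds `‖Q_s⁻¹‖ ≤ M/|s|²` and `‖T Q_s⁻¹‖ ≤ M/|s|` on `S_ω`
    (hR1 : ∀ t > 0, ∀ x : X, ‖R t x‖ ≤ M / t ^ 2 * ‖x‖)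
    (hR2 : ∀ t > 0, ∀ x : X, ‖T (R t x)‖ ≤ M / t * ‖x‖)
    (n k m : ℕ) (hnk : n < k) (hkm : k < m) :
    ∃ C : ℝ, 0 ≤ C ∧ ∀ x ∈ domN T (D : Set X) m,
      ‖x‖ + ‖(T ^ k) x‖
        ≤ C * (‖x‖ + ‖(T ^ n) x‖) ^ (((m : ℝ) - k) / ((m : ℝ) - n))
          * (‖x‖ + ‖(T ^ m) x‖) ^ (((k : ℝ) - n) / ((m : ℝ) - n)) := by
  have hD := real_smul_mem_and_map_smul_of_isClosed_graph hclosed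
  have hLandau : ∀ w ∈ domN T (D : Set X) 2, ∀ t > 0,
      ‖T w‖ ≤ (2 + 7 * M) * (t * ‖w‖ + ‖T (T w)‖ / t) := fun w hw t ht =>
    norm_apply_le_of_resolvent hM hD (map_real_smul _ (hRcont t ht)) (hRdom t ht) (hQR t ht)
      (hRQ t ht) ht (hR1 t ht) (hR2 t ht) hw
  obtain ⟨i, rfl⟩ := Nat.exists_eq_add_of_le hnk.le
  obtain ⟨N, rfl⟩ := Nat.exists_eq_add_of_le (hnk.trans hkm).le
  refine ⟨(1 + 2 * (2 + 7 * M)) ^ (i * (N - i)), by positivity, fun x hx => ?_⟩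
  rcases eq_or_ne x 0 with rfl | hx0
  · simp only [map_zero, norm_zero, add_zero]
    positivity
  have hchain := le_pow_mul_rpow_mul_rpow_of_le_mul_sqrt (by positivity) (by omega : 0 < N)
    (b := fun j => ‖x‖ + ‖(T ^ (n + j)) x‖)
    (fun j _ => add_pos_of_pos_of_nonneg (norm_pos_iff.2 hx0) (norm_nonneg _))
    (fun j _ => norm_add_norm_pow_succ_le (j := n + j) (by positivity) hLandau hx0
      fun l hl => hx l (by omega))
    (by omega : i ≤ N)
  convert hchain using 4 <;> push_cast <;> ring_nf

/-- `D(Tᵏ) ∈ J_{(k−n)/(m−n)}(D(Tⁿ), D(T^m))`, i.e. the graph norms satisfy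
`‖x‖_{D(Tᵏ)} ≤ C ‖x‖_{D(Tⁿ)}^{(m−k)/(m−n)} ‖x‖_{D(T^m)}^{(k−n)/(m−n)}` on `D(T^m)`. -/
theorem dom_pow_J_intermediate
    {X : Type*} [NormedAddCommGroup X] [NormedSpace ℝ X] [CompleteSpace X]
    [Module ℍᵐᵒᵖ X] [SMulCommClass ℍᵐᵒᵖ ℝ X]
    -- right Banach space: `‖x·s‖ = ‖x‖·|s|`
    (hnorm : ∀ (x : X) (s : ℍ), ‖(op s) • x‖ = ‖x‖ * ‖s‖)
    -- `T` is a closed right linear operator with domain `D`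
    (T : Module.End ℍᵐᵒᵖ X) (D : Submodule ℍᵐᵒᵖ X)
    (hclosed : IsClosed {p : X × X | p.1 ∈ (D : Set X) ∧ T p.1 = p.2})
    -- the ray `S_ω` lies in the S-resolvent set, with pseudo-resolvents `R t = Q_{te^{iω}}(T)⁻¹`
    (ω : ℝ) (hω : ω ∈ Set.Icc (0:ℝ) Real.pi)
    (M : ℝ) (hM : 0 ≤ M)
    (R : ℝ → Module.End ℍᵐᵒᵖ X)
    (hRcont : ∀ t > 0, Continuous (R t))
    (hRdom : ∀ t > 0, ∀ x : X, R t x ∈ domN T (D : Set X) 2)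
    (hQR : ∀ t > 0, ∀ x : X, Qray T ω t (R t x) = x)
    (hRQ : ∀ t > 0, ∀ x ∈ domN T (D : Set X) 2, R t (Qray T ω t x) = x)
    -- the resolvent bounds `‖Q_s⁻¹‖ ≤ M/|s|²` and `‖T Q_s⁻¹‖ ≤ M/|s|` on `S_ω`
    (hR1 : ∀ t > 0, ∀ x : X, ‖R t x‖ ≤ M / t ^ 2 * ‖x‖)
    (hR2 : ∀ t > 0, ∀ x : X, ‖T (R t x)‖ ≤ M / t * ‖x‖)
    (n k m : ℕ) (hnk : n < k) (hkm : k < m) :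
    ∃ C : ℝ, 0 ≤ C ∧ ∀ x ∈ domN T (D : Set X) m,
      ‖x‖ + ‖(T ^ k) x‖
        ≤ C * (‖x‖ + ‖(T ^ n) x‖) ^ (((m : ℝ) - k) / ((m : ℝ) - n))
          * (‖x‖ + ‖(T ^ m) x‖) ^ (((k : ℝ) - n) / ((m : ℝ) - n)) :=
  dom_pow_J_intermediate_general T D hclosed ω M hM R hRcont hRdom hQR hRQ hR1 hR2 n k m hnk hkm
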